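/- arXiv:1505.00019 — 2 statements merged into one kernel-verified Lean document; each statement's English description precedes it below -/
import Mathlib

section
/- The uniform morphism φ on {1,2,3} with φ(1)=12321, φ(2)=23132, φ(3)=31213 is weakly squarefree: for every weakly squarefree word W, the image φ(W) is weakly squarefree. -/
/-- A square: a word of the form `x ++ x` with `x` nonempty. -/
def IsSq {α : Type*} (w : List α) : Prop := ∃ x : List α, x ≠ [] ∧ w = x ++ x

/-- A cube: a word of the form `x ++ x ++ x` with `x` nonempty. -/
def IsCube {α : Type*} (w : List α) : Prop := ∃ x : List α, x ≠ [] ∧ w = x ++ x ++ x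

/-- A weak square: a word of the form `a ++ x ++ x ++ a` with `a` a letter. -/
def IsWeakSq {α : Type*} (w : List α) : Prop :=
  ∃ (a : α) (x : List α), w = a :: (x ++ x ++ [a])

/-- An overlap: a word of the form `a ++ x ++ a ++ x ++ a`. -/
def IsOverlap {α : Type*} (w : List α) : Prop :=
  ∃ (a : α) (x : List α), w = a :: (x ++ a :: x ++ [a])

def SqFree {α : Type*} (w : List α) : Prop := ∀ v, v <:+: w → ¬ IsSq v
def CubeFree {α : Type*} (w : List α) : Prop := ∀ v, v <:+: w → ¬ IsCube v
def WeakSqFree {α : Type*} (w : List α) : Prop := ∀ v, v <:+: w → ¬ IsWeakSq v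
def OverlapFree {α : Type*} (w : List α) : Prop := ∀ v, v <:+: w → ¬ IsOverlap v

/-- Applying the morphism determined by letter images `φ` to a finite word. -/
def applyM {α : Type*} (φ : α → List α) (w : List α) : List α := (w.map φ).flatten

def phi : Fin 3 → List (Fin 3) := ![[0,1,2,1,0], [1,2,0,2,1], [2,0,1,0,2]]

/-!
Let `φ` be `L`-uniform, with every `φ(c)` beginning and ending with `c`, containing no two equal
adjacent letters, and occurring in no `φ(d)φ(e)` at an offset strictly between `0` and `L`.

Let `a x x a` be a weak square in `φ(W)` with `|x| = p ≥ 2L`. The first `x` contains a whole block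
`φ(W[k])`, which reappears `p` positions later, so synchronisation forces `p = L m`. Comparing the
last letters of the blocks under the two halves gives `W[k] = W[k + m]` for every block of the first
half. If the square starts at the last letter of a block, its outer letters are the last and first
letters of blocks as well, and `W` contains a weak square. Otherwise the two outer letters `a` lie
in copies of one block `φ(W[q])`, at the adjacent offsets `r` and `r + 1`, which is excluded.

A weak square with `p < 2L` has length at most `4L`, so it lies in the image of a factor of `W` of
length at most five; for `phi` these images are checked exhaustively.
-/

variable {α : Type*}

def HasWeakSqAt (w : List α) (j p : ℕ) : Prop :=
  j + 2 * p + 1 < w.length ∧ w[j]? = w[j + 2 * p + 1]? ∧ ∀ d < p, w[j + 1 + d]? = w[j + 1 + p + d]?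

instance [DecidableEq α] (w : List α) (j p : ℕ) : Decidable (HasWeakSqAt w j p) :=
  inferInstanceAs (Decidable (_ ∧ _ ∧ _))

namespace HasWeakSqAt

variable {w : List α} {j p : ℕ}

lemma of_eq_append {s t x : List α} {a : α} (h : w = s ++ a :: (x ++ x ++ [a]) ++ t) :
    HasWeakSqAt w s.length x.length := by
  set v := a :: (x ++ x ++ [a])
  have hv : ∀ n < v.length, w[s.length + n]? = v[n]? := fun n hn => by
    rw [h, List.append_assoc, List.getElem?_append_right (by omega), Nat.add_sub_cancel_left,
      List.getElem?_append_left hn]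
  have hvlen : v.length = 2 * x.length + 2 := by simp [v]; omega
  refine ⟨by rw [h]; simp [v]; omega, ?_, fun d hd => ?_⟩
  · have h0 : w[s.length]? = some a := by simpa [v] using hv 0 (by omega)
    rw [h0, Nat.add_assoc, hv _ (by omega)]
    simp only [v, List.getElem?_cons_succ]
    rw [List.getElem?_append_right (by simp; omega)]
    simp [two_mul]
  · rw [show s.length + 1 + x.length + d = s.length + (x.length + d + 1) by omega,
      Nat.add_assoc, hv _ (by omega), hv _ (by omega), Nat.add_comm 1 d]
    simp only [v, List.getElem?_cons_succ, List.append_assoc]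
    rw [List.getElem?_append_left hd, List.getElem?_append_right (by omega),
      Nat.add_sub_cancel_left, List.getElem?_append_left hd]

lemma isWeakSq_take_drop (h : HasWeakSqAt w j p) : IsWeakSq ((w.drop j).take (2 * p + 2)) := by
  obtain ⟨hlen, hends, hper⟩ := h
  set y := w.drop (j + 1)
  have hx : (y.drop p).take p = y.take p := List.ext_getElem? fun n => by
    simp only [List.getElem?_take, List.getElem?_drop, y]
    split_ifs with hn
    · rw [hper n hn]; congr 1; omega
    · rfl
  have hy : y.drop (p + p) = w[j] :: w.drop (j + 2 * p + 2) := by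
    rw [List.getElem?_eq_getElem (by omega), List.getElem?_eq_getElem hlen, Option.some_inj]
      at hends
    rw [List.drop_drop, show j + 1 + (p + p) = j + 2 * p + 1 by omega,
      List.drop_eq_getElem_cons hlen, ← hends]
  refine ⟨w[j], y.take p, ?_⟩
  rw [List.drop_eq_getElem_cons (by omega), show 2 * p + 2 = p + p + 1 + 1 by omega,
    List.take_succ_cons, List.take_add, List.take_add, hx, hy]
  simp [y]

lemma getElem?_add_eq (h : HasWeakSqAt w j p) {t : ℕ} (ht₁ : j < t) (ht₂ : t ≤ j + p) :
    w[t + p]? = w[t]? := by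
  have := h.2.2 (t - (j + 1)) (by omega)
  rwa [show j + 1 + (t - (j + 1)) = t by omega,
    show j + 1 + p + (t - (j + 1)) = t + p by omega, eq_comm] at this

lemma take_drop_add_eq (h : HasWeakSqAt w j p) {t l : ℕ} (ht₁ : j < t) (ht₂ : t + l ≤ j + p + 1) :
    (w.drop (t + p)).take l = (w.drop t).take l :=
  List.ext_getElem? fun n => by
    simp only [List.getElem?_take, List.getElem?_drop]
    split_ifs with hn
    · rw [Nat.add_right_comm, h.getElem?_add_eq (by omega) (by omega)]
    · rfl

end HasWeakSqAt

lemma take_drop_infix (w : List α) (a b : ℕ) : (w.drop a).take b <:+: w :=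
  (List.take_prefix _ _).isInfix.trans (List.drop_suffix _ _).isInfix

theorem weakSqFree_iff_forall_not_hasWeakSqAt {w : List α} :
    WeakSqFree w ↔ ∀ j p, ¬ HasWeakSqAt w j p := by
  refine ⟨fun hw j p h => hw _ (take_drop_infix _ _ _) h.isWeakSq_take_drop, ?_⟩
  rintro hw v ⟨s, t, hst⟩ ⟨a, x, rfl⟩
  exact hw _ _ (.of_eq_append hst.symm)

theorem weakSqFree_iff_forall_lt_not_hasWeakSqAt {w : List α} :
    WeakSqFree w ↔ ∀ j < w.length, ∀ p < w.length, ¬ HasWeakSqAt w j p := by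
  rw [weakSqFree_iff_forall_not_hasWeakSqAt]
  exact ⟨fun hw j _ p _ => hw j p, fun hw j p h => hw j (by have := h.1; omega) p
    (by have := h.1; omega) h⟩

instance [DecidableEq α] : DecidablePred (WeakSqFree (α := α)) := fun _ =>
  decidable_of_iff _ weakSqFree_iff_forall_lt_not_hasWeakSqAt.symm

lemma WeakSqFree.of_infix {v w : List α} (hw : WeakSqFree w) (h : v <:+: w) : WeakSqFree v :=
  fun u hu => hw u (hu.trans h)

section UniformMorphism

variable {φ : α → List α} {L : ℕ}

@[simp] lemma applyM_nil : applyM φ [] = [] := rfl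

@[simp] lemma applyM_cons (c : α) (w : List α) : applyM φ (c :: w) = φ c ++ applyM φ w := rfl

lemma length_applyM (hφ : ∀ c, (φ c).length = L) (w : List α) :
    (applyM φ w).length = L * w.length := by
  induction w with
  | nil => rfl
  | cons c w ih => rw [applyM_cons, List.length_append, hφ, ih, List.length_cons, Nat.mul_succ,
      Nat.add_comm]

lemma applyM_drop (hφ : ∀ c, (φ c).length = L) (k : ℕ) (w : List α) :
    applyM φ (w.drop k) = (applyM φ w).drop (L * k) := by
  induction k generalizing w with
  | zero => simp
  | succ k ih =>
    cases w with
    | nil => simp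
    | cons c w =>
      rw [List.drop_succ_cons, ih, applyM_cons, Nat.mul_succ, Nat.add_comm, ← List.drop_drop,
        List.drop_left' (hφ c)]

lemma applyM_take (hφ : ∀ c, (φ c).length = L) (k : ℕ) (w : List α) :
    applyM φ (w.take k) = (applyM φ w).take (L * k) := by
  induction k generalizing w with
  | zero => simp
  | succ k ih =>
    cases w with
    | nil => simp
    | cons c w =>
      rw [List.take_succ_cons, applyM_cons, applyM_cons, ih, Nat.mul_succ, Nat.add_comm,
        List.take_append, List.take_of_length_le (l := φ c) (by rw [hφ]; omega), hφ,
        Nat.add_sub_cancel_left]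

lemma drop_mul_applyM (hφ : ∀ c, (φ c).length = L) {w : List α} {k : ℕ} (hk : k < w.length) :
    (applyM φ w).drop (L * k) = φ w[k] ++ applyM φ (w.drop (k + 1)) := by
  rw [← applyM_drop hφ, List.drop_eq_getElem_cons hk, applyM_cons]

lemma take_drop_mul_applyM (hφ : ∀ c, (φ c).length = L) {w : List α} {k : ℕ}
    (hk : k < w.length) : ((applyM φ w).drop (L * k)).take L = φ w[k] := by
  rw [drop_mul_applyM hφ hk, List.take_left' (hφ _)]

lemma take_drop_mul_add_applyM (hφ : ∀ c, (φ c).length = L) {w : List α} {k u : ℕ}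
    (hk : k + 1 < w.length) (hu : u ≤ L) :
    ((applyM φ w).drop (L * k + u)).take L = ((φ w[k] ++ φ w[k + 1]).drop u).take L := by
  rw [← List.drop_drop, drop_mul_applyM hφ (by omega), List.drop_eq_getElem_cons hk, applyM_cons,
    ← List.append_assoc, List.drop_append_of_le_length (by simp [hφ]; omega),
    List.take_append_of_le_length (by simp [hφ]; omega)]

lemma getElem?_applyM (hφ : ∀ c, (φ c).length = L) (w : List α) (k : ℕ) {r : ℕ} (hr : r < L) :
    (applyM φ w)[L * k + r]? = w[k]?.bind fun c => (φ c)[r]? := by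
  rw [← List.getElem?_drop, ← applyM_drop hφ, ← Nat.add_zero k, ← List.getElem?_drop, Nat.add_zero]
  cases w.drop k with
  | nil => simp
  | cons c w => simp [List.getElem?_append_left, hφ, hr]

lemma getElem?_mul_applyM (hφ : ∀ c, (φ c).length = L) (hhead : ∀ c, (φ c).head? = some c)
    (hL : 0 < L) (w : List α) (k : ℕ) : (applyM φ w)[L * k]? = w[k]? := by
  have hφ0 : ∀ c, (φ c)[0]? = some c := fun c => by rw [← List.head?_eq_getElem?, hhead]
  simpa [hφ0] using getElem?_applyM hφ w k hL

lemma getElem?_mul_add_pred_applyM (hφ : ∀ c, (φ c).length = L)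
    (hlast : ∀ c, (φ c).getLast? = some c) (hL : 0 < L) (w : List α) (k : ℕ) :
    (applyM φ w)[L * k + (L - 1)]? = w[k]? := by
  have hφL : ∀ c, (φ c)[L - 1]? = some c := fun c => by
    rw [← hφ c, ← List.getLast?_eq_getElem?, hlast]
  simpa [hφL] using getElem?_applyM hφ w k (r := L - 1) (by omega)

lemma take_drop_infix_applyM (hφ : ∀ c, (φ c).length = L) (w : List α) {j l n : ℕ}
    (h : j % L + l ≤ L * n) :
    ((applyM φ w).drop j).take l <:+: applyM φ ((w.drop (j / L)).take n) := by
  have hj : (applyM φ w).drop j = ((applyM φ w).drop (L * (j / L))).drop (j % L) := by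
    rw [List.drop_drop, Nat.div_add_mod]
  rw [hj, applyM_take hφ, applyM_drop hφ]
  generalize (applyM φ w).drop (L * (j / L)) = u
  rw [← Nat.min_eq_left (show l ≤ L * n - j % L by omega), ← List.take_take, ← List.drop_take]
  exact take_drop_infix _ _ _

variable {w : List α} {j p m : ℕ}

lemma pos_of_hasWeakSqAt_applyM (hφ : ∀ c, (φ c).length = L) (h : HasWeakSqAt (applyM φ w) j p) :
    0 < L := by
  have := h.1
  rw [length_applyM hφ] at this
  exact Nat.pos_of_ne_zero (by rintro rfl; simp at this)

lemma mod_eq_zero_of_hasWeakSqAt_applyM (hφ : ∀ c, (φ c).length = L)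
    (hsync : ∀ c d e u, 0 < u → u < L → ((φ d ++ φ e).drop u).take L ≠ φ c)
    (h : HasWeakSqAt (applyM φ w) j p) (hp : 2 * L ≤ p) : p % L = 0 := by
  have hL := pos_of_hasWeakSqAt_applyM hφ h
  have hlen := h.1
  rw [length_applyM hφ] at hlen
  obtain ⟨q, r, hr, hj⟩ : ∃ q r, r < L ∧ j + 1 = L * q + r :=
    ⟨_, _, Nat.mod_lt _ hL, (Nat.div_add_mod _ _).symm⟩
  obtain ⟨m, u, hu, rfl⟩ : ∃ m u, u < L ∧ p = L * m + u :=
    ⟨_, _, Nat.mod_lt _ hL, (Nat.div_add_mod _ _).symm⟩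
  have hm : L * 2 ≤ L * m := Nat.mul_le_mul_left _ (by
    by_contra! hm
    have : L * m ≤ L * 1 := Nat.mul_le_mul_left _ (by omega)
    omega)
  have hk : q + 1 + m + 1 < w.length := Nat.lt_of_mul_lt_mul_left (a := L) (by
    have : L * (q + 1 + m + 1) = L * q + L * m + L * 2 := by ring
    omega)
  rw [Nat.mul_add_mod_self_left, Nat.mod_eq_of_lt hu]
  by_contra hu0
  refine hsync w[q + 1] w[q + 1 + m] w[q + 1 + m + 1] u (by omega) hu ?_
  have hq : L * (q + 1) = L * q + L := by ring
  have hqm : L * (q + 1 + m) = L * q + L + L * m := by ring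
  rw [← take_drop_mul_add_applyM hφ hk hu.le, ← take_drop_mul_applyM hφ (by omega),
    ← h.take_drop_add_eq (t := L * (q + 1)) (by omega) (by omega), hq, hqm]
  congr 2
  omega

lemma getElem?_add_eq_of_hasWeakSqAt_applyM (hφ : ∀ c, (φ c).length = L)
    (hlast : ∀ c, (φ c).getLast? = some c) (h : HasWeakSqAt (applyM φ w) j (L * m)) {k : ℕ}
    (hk₁ : j < L * k + (L - 1)) (hk₂ : L * k + (L - 1) ≤ j + L * m) : w[k + m]? = w[k]? := by
  have hL := pos_of_hasWeakSqAt_applyM hφ h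
  rw [← getElem?_mul_add_pred_applyM hφ hlast hL w k,
    ← getElem?_mul_add_pred_applyM hφ hlast hL w (k + m), Nat.mul_add, Nat.add_right_comm,
    h.getElem?_add_eq hk₁ hk₂]

lemma HasWeakSqAt.of_applyM_of_aligned (hφ : ∀ c, (φ c).length = L)
    (hhead : ∀ c, (φ c).head? = some c) (hlast : ∀ c, (φ c).getLast? = some c) {q : ℕ}
    (h : HasWeakSqAt (applyM φ w) (L * q + (L - 1)) (L * m)) : HasWeakSqAt w q m := by
  have hL := pos_of_hasWeakSqAt_applyM hφ h
  have hlen := h.1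
  rw [length_applyM hφ] at hlen
  have hq : L * (q + 2 * m + 1) = L * q + (L - 1) + 2 * (L * m) + 1 := by
    rw [show L * (q + 2 * m + 1) = L * q + 2 * (L * m) + L by ring]; omega
  refine ⟨Nat.lt_of_mul_lt_mul_left (a := L) (by omega), ?_, fun d hd => ?_⟩
  · rw [← getElem?_mul_add_pred_applyM hφ hlast hL w q,
      ← getElem?_mul_applyM hφ hhead hL w (q + 2 * m + 1), hq, h.2.1]
  · have hd' : L * (q + 1 + d) = L * q + L + L * d := by ring
    have hdm : L * (d + 1) ≤ L * m := Nat.mul_le_mul_left _ hd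
    rw [show q + 1 + m + d = q + 1 + d + m by omega,
      getElem?_add_eq_of_hasWeakSqAt_applyM hφ hlast h (k := q + 1 + d) (by omega)
      (by rw [Nat.mul_succ] at hdm; omega)]

lemma not_hasWeakSqAt_applyM_of_misaligned (hφ : ∀ c, (φ c).length = L)
    (hhead : ∀ c, (φ c).head? = some c) (hlast : ∀ c, (φ c).getLast? = some c)
    (hadj : ∀ c, (φ c).IsChain (· ≠ ·)) {q r : ℕ} (hr : r + 1 < L) (hm : 0 < m) :
    ¬ HasWeakSqAt (applyM φ w) (L * q + r) (L * m) := by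
  intro h
  have hL := pos_of_hasWeakSqAt_applyM hφ h
  have hlen := h.1
  rw [length_applyM hφ] at hlen
  have hLm : L * 1 ≤ L * m := Nat.mul_le_mul_left _ hm
  have hq : q < w.length := Nat.lt_of_mul_lt_mul_left (a := L) (by omega)
  have hqm : L * (q + m) = L * q + L * m := by ring
  have hfar : w[q + m + m]? = w[q]? := by
    rw [← getElem?_mul_applyM hφ hhead hL w (q + m + m), Nat.mul_add, hqm,
      h.getElem?_add_eq (t := L * q + L * m) (by omega) (by omega), ← hqm,
      getElem?_mul_applyM hφ hhead hL,
      getElem?_add_eq_of_hasWeakSqAt_applyM hφ hlast h (k := q) (by omega) (by omega)]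
  have hends := h.2.1
  rw [show L * q + r + 2 * (L * m) + 1 = L * (q + m + m) + (r + 1) by ring,
    getElem?_applyM hφ _ _ (by omega), getElem?_applyM hφ _ _ (by omega), hfar,
    List.getElem?_eq_getElem hq, Option.bind_some, Option.bind_some,
    List.getElem?_eq_getElem (by rw [hφ]; omega), List.getElem?_eq_getElem (by rw [hφ]; omega),
    Option.some_inj] at hends
  exact (hadj w[q]).getElem r (by rw [hφ]; exact hr) hends

lemma exists_hasWeakSqAt_of_hasWeakSqAt_applyM (hφ : ∀ c, (φ c).length = L)
    (hhead : ∀ c, (φ c).head? = some c) (hlast : ∀ c, (φ c).getLast? = some c)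
    (hadj : ∀ c, (φ c).IsChain (· ≠ ·))
    (hsync : ∀ c d e u, 0 < u → u < L → ((φ d ++ φ e).drop u).take L ≠ φ c)
    (h : HasWeakSqAt (applyM φ w) j p) (hp : 2 * L ≤ p) : ∃ q m, HasWeakSqAt w q m := by
  have hL := pos_of_hasWeakSqAt_applyM hφ h
  obtain ⟨m, rfl⟩ := Nat.dvd_of_mod_eq_zero (mod_eq_zero_of_hasWeakSqAt_applyM hφ hsync h hp)
  obtain ⟨q, r, hr, rfl⟩ : ∃ q r, r < L ∧ j = L * q + r :=
    ⟨_, _, Nat.mod_lt _ hL, (Nat.div_add_mod _ _).symm⟩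
  rcases (show r + 1 < L ∨ r = L - 1 by omega) with hr' | rfl
  · exact absurd h (not_hasWeakSqAt_applyM_of_misaligned hφ hhead hlast hadj hr'
      (Nat.pos_of_ne_zero (by rintro rfl; omega)))
  · exact ⟨q, m, h.of_applyM_of_aligned hφ hhead hlast⟩

end UniformMorphism

theorem weakSqFree_applyM_of_length_le_five {φ : α → List α} {L : ℕ}
    (hφ : ∀ c, (φ c).length = L) (hhead : ∀ c, (φ c).head? = some c)
    (hlast : ∀ c, (φ c).getLast? = some c) (hadj : ∀ c, (φ c).IsChain (· ≠ ·))
    (hsync : ∀ c d e u, 0 < u → u < L → ((φ d ++ φ e).drop u).take L ≠ φ c)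
    (hshort : ∀ w : List α, w.length ≤ 5 → WeakSqFree w → WeakSqFree (applyM φ w))
    {w : List α} (hw : WeakSqFree w) : WeakSqFree (applyM φ w) := by
  rw [weakSqFree_iff_forall_not_hasWeakSqAt]
  intro j p h
  rcases le_or_gt (2 * L) p with hp | hp
  · obtain ⟨q, m, h'⟩ := exists_hasWeakSqAt_of_hasWeakSqAt_applyM hφ hhead hlast hadj hsync h hp
    exact weakSqFree_iff_forall_not_hasWeakSqAt.1 hw q m h'
  · have hL := pos_of_hasWeakSqAt_applyM hφ h
    have hinfix := take_drop_infix_applyM hφ w (j := j) (l := 2 * p + 2) (n := 5)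
      (by have := Nat.mod_lt j hL; omega)
    exact hshort _ (List.length_take_le _ _) (hw.of_infix (take_drop_infix _ _ _)) _ hinfix
      h.isWeakSq_take_drop

lemma mem_sections_replicate {l w : List α} (h : ∀ a ∈ w, a ∈ l) :
    w ∈ (List.replicate w.length l).sections := by
  rw [List.mem_sections]
  induction w with
  | nil => simp
  | cons a w ih => simp_all [List.replicate_succ]

lemma phi_length : ∀ c, (phi c).length = 5 := by decide

lemma phi_head : ∀ c, (phi c).head? = some c := by decide

lemma phi_getLast : ∀ c, (phi c).getLast? = some c := by decide

lemma phi_isChain : ∀ c, (phi c).IsChain (· ≠ ·) := by decide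

lemma phi_sync : ∀ c d e u, 0 < u → u < 5 → ((phi d ++ phi e).drop u).take 5 ≠ phi c := by
  intro c d e u hu₀ hu₅
  interval_cases u <;> revert c d e <;> decide

lemma weakSqFree_applyM_phi_of_length_le (w : List (Fin 3)) (hw : w.length ≤ 5) :
    WeakSqFree w → WeakSqFree (applyM phi w) := by
  have key : ∀ n ∈ List.range 6, ∀ w ∈ (List.replicate n (List.finRange 3)).sections,
      WeakSqFree w → WeakSqFree (applyM phi w) := by decide +kernel
  exact key _ (List.mem_range.2 (by omega)) w
    (mem_sections_replicate fun a _ => List.mem_finRange a)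

theorem stmt3 : ∀ W : List (Fin 3), WeakSqFree W → WeakSqFree (applyM phi W) :=
  fun _ => weakSqFree_applyM_of_length_le_five phi_length phi_head phi_getLast phi_isChain
    phi_sync weakSqFree_applyM_phi_of_length_le
end

section
/- Over the binary alphabet {0,1}, every word of length at least 6 contains a cube or a weak square. Equivalently, there are no cubefree and weakly squarefree binary words of length greater than 5. -/
/-!
Having a cube or a weak square as a factor passes from a word to every word containing it, so
it suffices to look at the 64 binary words of length 6, each of which has such a factor. That
finite check is done by `decide`: a word `v` can only be the cube `x ++ x ++ x` for
`x = v.take (v.length / 3)`, and `a :: t` can only be the weak square `a :: (x ++ x ++ [a])` for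
`x = t.take ((t.length - 1) / 2)`, which makes both predicates decidable.
-/

namespace List

variable {α : Type*}

theorem infix_of_mem_flatMap_tails_inits {u v : List α} (h : v ∈ u.tails.flatMap inits) :
    v <:+: u := by
  obtain ⟨t, ht, hv⟩ := mem_flatMap.mp h
  exact ((mem_inits _ _).mp hv).isInfix.trans ((mem_tails _ _).mp ht).isInfix

end List

section Decidability

variable {α : Type*}

theorem isCube_iff_take (v : List α) :
    IsCube v ↔ v.take (v.length / 3) ≠ [] ∧
      v = v.take (v.length / 3) ++ v.take (v.length / 3) ++ v.take (v.length / 3) := by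
  constructor
  · rintro ⟨x, hx, rfl⟩
    have hlen : (x ++ x ++ x).length / 3 = x.length := by simp only [List.length_append]; omega
    rw [hlen, List.append_assoc, List.append_assoc, List.take_left]
    exact ⟨hx, rfl⟩
  · exact fun h => ⟨_, h⟩

theorem not_isWeakSq_nil : ¬ IsWeakSq ([] : List α) := by
  rintro ⟨a, x, h⟩
  exact List.cons_ne_nil _ _ h.symm

theorem isWeakSq_cons_iff (a : α) (t : List α) :
    IsWeakSq (a :: t) ↔
      t = t.take ((t.length - 1) / 2) ++ t.take ((t.length - 1) / 2) ++ [a] := by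
  constructor
  · rintro ⟨b, x, h⟩
    obtain ⟨rfl, rfl⟩ := List.cons_eq_cons.mp h
    have hlen : ((x ++ x ++ [a]).length - 1) / 2 = x.length := by
      simp only [List.length_append, List.length_singleton]; omega
    rw [hlen, List.append_assoc, List.append_assoc, List.take_left]
  · exact fun h => ⟨a, _, congrArg (a :: ·) h⟩

variable [DecidableEq α]

instance : DecidablePred (IsCube : List α → Prop) :=
  fun v => decidable_of_iff _ (isCube_iff_take v).symm

instance : DecidablePred (IsWeakSq : List α → Prop)
  | [] => isFalse not_isWeakSq_nil
  | a :: t => decidable_of_iff _ (isWeakSq_cons_iff a t).symm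

end Decidability

theorem exists_cube_or_weakSq_of_length_six : ∀ a b c d e f : Fin 2,
    ∃ v ∈ [a, b, c, d, e, f].tails.flatMap List.inits, IsCube v ∨ IsWeakSq v := by
  decide

theorem stmt14 : ∀ w : List (Fin 2), 6 ≤ w.length →
    ∃ v, v <:+: w ∧ (IsCube v ∨ IsWeakSq v) := by
  intro w hw
  obtain ⟨u, hu, huw⟩ : ∃ u : List (Fin 2), u.length = 6 ∧ u <+: w :=
    ⟨w.take 6, by simp only [List.length_take]; omega, List.take_prefix 6 w⟩
  obtain _ | ⟨a, _ | ⟨b, _ | ⟨c, _ | ⟨d, _ | ⟨e, _ | ⟨f, _ | ⟨g, u⟩⟩⟩⟩⟩⟩⟩ := u <;>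
    simp only [List.length_cons, List.length_nil] at hu <;> try omega
  obtain ⟨v, hv, hcube⟩ := exists_cube_or_weakSq_of_length_six a b c d e f
  exact ⟨v, (List.infix_of_mem_flatMap_tails_inits hv).trans huw.isInfix, hcube⟩
end
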